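/- For every nonnegative integer n and all real x, y, n! times the coefficient of t^n in the formal power series Σ_{k=0}^{n} ((x)_k y^k / k!) · (G − 1)^k equals φ_n^Y(x,y) = Σ_{k=0}^{n} {n brace k}_Y (x)_k y^k, where G = Σ_{m≥0} E[Y^m] t^m / m! is the formal moment series of Y. -/

import Mathlib

open MeasureTheory ProbabilityTheory Finset

noncomputable section

variable {Ω : Type*} [MeasureSpace Ω]

/-- The falling factorial `(x)_k = x (x-1) ⋯ (x-k+1)`. -/
def fallFac (x : ℝ) (k : ℕ) : ℝ := ∏ i ∈ Finset.range k, (x - (i : ℝ))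

/-- Partial sums `S_k = Y_1 + ⋯ + Y_k` (with `S_0 = 0`). -/
def S (Y : ℕ → Ω → ℝ) (k : ℕ) (ω : Ω) : ℝ := ∑ i ∈ Finset.range k, Y i ω

/-- The probabilistic Stirling numbers of the second kind associated with `Y`:
`{n brace k}_Y = (1/k!) ∑_{i=0}^{k} C(k,i) (−1)^{k−i} E[S_i^n]`. -/
def probStirling (Y : ℕ → Ω → ℝ) (n k : ℕ) : ℝ :=
  ((k.factorial : ℝ))⁻¹ *
    ∑ i ∈ Finset.range (k + 1), (k.choose i : ℝ) * (-1) ^ (k - i) * ∫ ω, (S Y i ω) ^ n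

/-- The probabilistic bivariate Bell polynomials associated with `Y`:
`φ_n^Y(x,y) = ∑_{k=0}^{n} {n brace k}_Y (x)_k y^k`. -/
def phiBiv (Y : ℕ → Ω → ℝ) (n : ℕ) (x y : ℝ) : ℝ :=
  ∑ k ∈ Finset.range (n + 1), probStirling Y n k * fallFac x k * y ^ k

/-- The formal moment series `G = ∑_{m≥0} E[Y₀^m] t^m / m!` of `Y₀`. -/
def momentSeries (Y₀ : Ω → ℝ) : PowerSeries ℝ :=
  PowerSeries.mk fun m => (∫ ω, (Y₀ ω) ^ m) / (m.factorial : ℝ)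

section Aux

variable [IsProbabilityMeasure (volume : Measure Ω)]
    {Y : ℕ → Ω → ℝ} {Y₀ : Ω → ℝ}

variable (hMeas : ∀ i, Measurable (Y i))
variable (hIndep : iIndepFun Y volume)
variable (hId : ∀ i, IdentDistrib (Y i) Y₀ volume volume)
variable (hInt : ∀ m : ℕ, Integrable fun ω => (Y₀ ω) ^ m)

set_option linter.unusedSectionVars false
include hMeas hIndep hId hInt

lemma aux_identDistrib_pow (i m : ℕ) :
    IdentDistrib (fun ω => (Y i ω) ^ m) (fun ω => (Y₀ ω) ^ m) volume volume :=
  (hId i).comp (measurable_id.pow_const m)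

lemma aux_intY (i m : ℕ) : Integrable fun ω => (Y i ω) ^ m :=
  ((aux_identDistrib_pow hMeas hIndep hId hInt i m).integrable_iff).mpr (hInt m)

lemma aux_intY_eq (i m : ℕ) : ∫ ω, (Y i ω) ^ m = ∫ ω, (Y₀ ω) ^ m :=
  (aux_identDistrib_pow hMeas hIndep hId hInt i m).integral_eq

lemma aux_indep_S (i : ℕ) : IndepFun (S Y i) (Y i) volume := by
  have h : IndepFun (∑ j ∈ Finset.range i, Y j) (Y i) volume :=
    hIndep.indepFun_finsetSum_of_notMem hMeas (by simp)
  have : S Y i = ∑ j ∈ Finset.range i, Y j := by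
    funext ω; simp [S]
  rwa [this]

lemma aux_indep_pow (i j m : ℕ) :
    IndepFun (fun ω => (S Y i ω) ^ j) (fun ω => (Y i ω) ^ m) volume :=
  (aux_indep_S hMeas hIndep hId hInt i).comp (measurable_id.pow_const j) (measurable_id.pow_const m)

lemma aux_intS (i : ℕ) : ∀ m : ℕ, Integrable fun ω => (S Y i ω) ^ m := by
  induction i with
  | zero =>
    intro m
    have : (fun ω : Ω => (S Y 0 ω) ^ m) = fun _ => (0 : ℝ) ^ m := by
      funext ω; simp [S]
    rw [this]; exact integrable_const _
  | succ i ih =>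
    intro m
    have hS : (fun ω : Ω => (S Y (i + 1) ω) ^ m)
        = fun ω => ∑ j ∈ Finset.range (m + 1),
            (S Y i ω) ^ j * (Y i ω) ^ (m - j) * (m.choose j : ℝ) := by
      funext ω
      have : S Y (i + 1) ω = S Y i ω + Y i ω := by simp [S, Finset.sum_range_succ]
      rw [this, add_pow]
    rw [hS]
    apply integrable_finset_sum
    intro j _
    exact ((aux_indep_pow hMeas hIndep hId hInt i j (m - j)).integrable_mul (ih j)
      (aux_intY hMeas hIndep hId hInt i (m - j))).mul_const _

lemma aux_moment_step (i n : ℕ) :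
    ∫ ω, (S Y (i + 1) ω) ^ n
      = ∑ j ∈ Finset.range (n + 1),
          (∫ ω, (S Y i ω) ^ j) * (∫ ω, (Y₀ ω) ^ (n - j)) * (n.choose j : ℝ) := by
  have hS : (fun ω : Ω => (S Y (i + 1) ω) ^ n)
      = fun ω => ∑ j ∈ Finset.range (n + 1),
          (S Y i ω) ^ j * (Y i ω) ^ (n - j) * (n.choose j : ℝ) := by
    funext ω
    have : S Y (i + 1) ω = S Y i ω + Y i ω := by simp [S, Finset.sum_range_succ]
    rw [this, add_pow]
  rw [hS, integral_finset_sum]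
  · refine Finset.sum_congr rfl fun j _ => ?_
    rw [integral_mul_const]
    congr 1
    have := (aux_indep_pow hMeas hIndep hId hInt i j (n - j)).integral_mul_eq_mul_integral
      (aux_intS hMeas hIndep hId hInt i j).aestronglyMeasurable (aux_intY hMeas hIndep hId hInt i (n - j)).aestronglyMeasurable
    have heq : (fun ω => (S Y i ω) ^ j * (Y i ω) ^ (n - j))
        = (fun ω => (S Y i ω) ^ j) * fun ω => (Y i ω) ^ (n - j) := rfl
    rw [heq, this, aux_intY_eq hMeas hIndep hId hInt i (n - j)]
  · intro j _
    exact ((aux_indep_pow hMeas hIndep hId hInt i j (n - j)).integrable_mul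
      (aux_intS hMeas hIndep hId hInt i j) (aux_intY hMeas hIndep hId hInt i (n - j))).mul_const _

lemma aux_momentSeries_pow (i : ℕ) :
    (momentSeries Y₀) ^ i
      = PowerSeries.mk fun m => (∫ ω, (S Y i ω) ^ m) / (m.factorial : ℝ) := by
  induction i with
  | zero =>
    ext m
    rw [pow_zero, PowerSeries.coeff_mk]
    have : (fun ω : Ω => (S Y 0 ω) ^ m) = fun _ : Ω => (0 : ℝ) ^ m := by
      funext ω; simp [S]
    rw [this, integral_const]
    simp [PowerSeries.coeff_one]
    rcases Nat.eq_zero_or_pos m with h | h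
    · simp [h]
    · simp [h.ne', zero_pow h.ne']
  | succ i ih =>
    ext n
    rw [pow_succ, ih, PowerSeries.coeff_mul, PowerSeries.coeff_mk,
      Finset.Nat.sum_antidiagonal_eq_sum_range_succ_mk,
      aux_moment_step hMeas hIndep hId hInt i n]
    rw [Finset.sum_div]
    refine Finset.sum_congr rfl fun j hj => ?_
    rw [Finset.mem_range] at hj
    have hj' : j ≤ n := Nat.lt_succ_iff.mp hj
    rw [PowerSeries.coeff_mk]
    simp only [momentSeries, PowerSeries.coeff_mk]
    rw [Nat.cast_choose ℝ hj']
    have h1 : (j.factorial : ℝ) ≠ 0 := Nat.cast_ne_zero.mpr j.factorial_ne_zero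
    have h2 : ((n - j).factorial : ℝ) ≠ 0 := Nat.cast_ne_zero.mpr (n - j).factorial_ne_zero
    have h3 : (n.factorial : ℝ) ≠ 0 := Nat.cast_ne_zero.mpr n.factorial_ne_zero
    field_simp

end Aux

theorem probBivBell_generatingFunction
    [IsProbabilityMeasure (volume : Measure Ω)]
    (Y : ℕ → Ω → ℝ) (Y₀ : Ω → ℝ)
    (hMeas : ∀ i, Measurable (Y i))
    (hIndep : iIndepFun Y volume)
    (hId : ∀ i, IdentDistrib (Y i) Y₀ volume volume)
    (hInt : ∀ m : ℕ, Integrable fun ω => (Y₀ ω) ^ m)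
    (n : ℕ) (x y : ℝ) :
    (n.factorial : ℝ) *
        PowerSeries.coeff n
          (∑ k ∈ Finset.range (n + 1),
            (fallFac x k * y ^ k * ((k.factorial : ℝ))⁻¹) • (momentSeries Y₀ - 1) ^ k) =
      phiBiv Y n x y := by
  have hn : (n.factorial : ℝ) ≠ 0 := Nat.cast_ne_zero.mpr n.factorial_ne_zero
  rw [map_sum, Finset.mul_sum, phiBiv]
  refine Finset.sum_congr rfl fun k hk => ?_
  rw [PowerSeries.coeff_smul, smul_eq_mul]
  have hcoeff : PowerSeries.coeff n ((momentSeries Y₀ - 1) ^ k)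
      = ∑ i ∈ Finset.range (k + 1),
          (-1 : ℝ) ^ (k - i) * ((∫ ω, (S Y i ω) ^ n) / (n.factorial : ℝ))
            * (k.choose i : ℝ) := by
    rw [sub_pow, map_sum]
    refine Finset.sum_congr rfl fun i hi => ?_
    rw [Finset.mem_range] at hi
    have hik : i ≤ k := Nat.lt_succ_iff.mp hi
    have hpar : (-1 : ℝ) ^ (i + k) = (-1 : ℝ) ^ (k - i) := by
      rw [show i + k = (k - i) + 2 * i by omega, pow_add, pow_mul]
      simp
    have hterm : (-1 : PowerSeries ℝ) ^ (i + k) * (momentSeries Y₀) ^ i * 1 ^ (k - i)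
          * ((k.choose i : ℕ) : PowerSeries ℝ)
        = PowerSeries.C ((-1 : ℝ) ^ (k - i) * (k.choose i : ℝ)) * (momentSeries Y₀) ^ i := by
      have h1 : (-1 : PowerSeries ℝ) = PowerSeries.C (-1) := by simp
      have h2 : ((k.choose i : ℕ) : PowerSeries ℝ) = PowerSeries.C ((k.choose i : ℕ) : ℝ) :=
        (map_natCast (PowerSeries.C) _).symm
      rw [h1, h2, ← map_pow, hpar, one_pow, mul_one, map_mul]
      ring
    rw [hterm, PowerSeries.coeff_C_mul, aux_momentSeries_pow hMeas hIndep hId hInt i,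
      PowerSeries.coeff_mk]
    ring
  rw [hcoeff, probStirling]
  simp only [Finset.mul_sum, Finset.sum_mul]
  refine Finset.sum_congr rfl fun i _ => ?_
  field_simp
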